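/- In the Blocksworld domain restricted to clear(x) instances, the abstract action set {⟨¬H, n(x)>0 ; H, n(x)↓⟩, ⟨H ; ¬H⟩} over features H (some block is held) and n(x) (number of blocks above x) is sound relative to Q_clear: in any reachable state s of any instance, (i) if the gripper is empty and some block is above x, then unstacking the topmost block above x is applicable, makes H true, and strictly decreases n(x); (ii) if a block is held, then putting it on the table is applicable, makes H false, and does not change n(x). -/

import Mathlib

inductive Loc (B : Type)
  | table
  | on (b : B)
  | held
deriving DecidableEq

/-- A Blocksworld state: the location of each block (table, on a block, or held). -/
abbrev BWState (B : Type) := B → Loc B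

/-- Block `a` is (strictly) above block `x`. -/
def Above {B : Type} (s : BWState B) (a x : B) : Prop :=
  Relation.TransGen (fun u v => s u = Loc.on v) a x

/-- n(x): number of blocks above x. -/
noncomputable def nAbove {B : Type} (s : BWState B) (x : B) : ℕ :=
  {b | Above s b x}.ncard

/-- H: some block is held by the gripper. -/
def Held {B : Type} (s : BWState B) : Prop := ∃ b, s b = Loc.held

inductive BWAct (B : Type)
  | unstack (a c : B)
  | pickup (a : B)
  | putdown (a : B)
  | stack (a c : B)

def clearTop {B : Type} (s : BWState B) (a : B) : Prop := ∀ c, s c ≠ Loc.on a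

def bwApp {B : Type} (s : BWState B) : BWAct B → Prop
  | .unstack a c => s a = Loc.on c ∧ clearTop s a ∧ ¬ Held s
  | .pickup a => s a = Loc.table ∧ clearTop s a ∧ ¬ Held s
  | .putdown a => s a = Loc.held
  | .stack a c => s a = Loc.held ∧ clearTop s c ∧ a ≠ c

def bwSucc {B : Type} [DecidableEq B] (s : BWState B) : BWAct B → BWState B
  | .unstack a _ => Function.update s a Loc.held
  | .pickup a => Function.update s a Loc.held
  | .putdown a => Function.update s a Loc.table
  | .stack a c => Function.update s a (Loc.on c)

/-- Initial states: gripper empty, blocks form towers (the `on` relation is acyclic). -/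
def InitBW {B : Type} (s : BWState B) : Prop := ¬ Held s ∧ ∀ b, ¬ Above s b b

def ReachBW {B : Type} [DecidableEq B] (s : BWState B) : Prop :=
  ∃ s₀, InitBW s₀ ∧
    Relation.ReflTransGen (fun u v => ∃ a, bwApp u a ∧ v = bwSucc u a) s₀ s


section Aux

variable {B : Type} [DecidableEq B]

/-- Invariant: acyclicity, held blocks are clear, at most one held block. -/
def BWInv (s : BWState B) : Prop :=
  (∀ b, ¬ Above s b b) ∧ (∀ a, s a = Loc.held → clearTop s a) ∧
  (∀ a b, s a = Loc.held → s b = Loc.held → a = b)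

lemma above_mono {s t : BWState B} (h : ∀ u v, s u = Loc.on v → t u = Loc.on v)
    {a x : B} (ha : Above s a x) : Above t a x :=
  Relation.TransGen.mono h _ _ ha

lemma edge_update_not_on {s : BWState B} {a : B} {l : Loc B} (hl : ∀ v, l ≠ Loc.on v)
    {u v : B} (h : Function.update s a l u = Loc.on v) : s u = Loc.on v := by
  rcases eq_or_ne u a with rfl | hne
  · rw [Function.update_self] at h; exact absurd h (hl v)
  · rwa [Function.update_of_ne hne] at h

lemma inv_step {s : BWState B} (hI : BWInv s) (act : BWAct B) (hApp : bwApp s act) :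
    BWInv (bwSucc s act) := by
  obtain ⟨hacyc, hclear, huniq⟩ := hI
  cases act with
  | unstack a c =>
      obtain ⟨hon, hcl, hnh⟩ := hApp
      simp only [bwSucc]
      refine ⟨?_, ?_, ?_⟩
      · intro b hb
        exact hacyc b (above_mono (fun u v h => edge_update_not_on (by simp) h) hb)
      · intro b hb u hu
        have hb' : b = a := by
          rcases eq_or_ne b a with rfl | hne
          · rfl
          · rw [Function.update_of_ne hne] at hb; exact absurd ⟨b, hb⟩ hnh
        subst hb'
        exact hcl u (edge_update_not_on (by simp) hu)
      · intro b b' hb hb'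
        have hb1 : b = a := by
          rcases eq_or_ne b a with rfl | hne
          · rfl
          · rw [Function.update_of_ne hne] at hb; exact absurd ⟨b, hb⟩ hnh
        have hb2 : b' = a := by
          rcases eq_or_ne b' a with rfl | hne
          · rfl
          · rw [Function.update_of_ne hne] at hb'; exact absurd ⟨b', hb'⟩ hnh
        rw [hb1, hb2]
  | pickup a =>
      obtain ⟨hon, hcl, hnh⟩ := hApp
      simp only [bwSucc]
      refine ⟨?_, ?_, ?_⟩
      · intro b hb
        exact hacyc b (above_mono (fun u v h => edge_update_not_on (by simp) h) hb)
      · intro b hb u hu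
        have hb' : b = a := by
          rcases eq_or_ne b a with rfl | hne
          · rfl
          · rw [Function.update_of_ne hne] at hb; exact absurd ⟨b, hb⟩ hnh
        subst hb'
        exact hcl u (edge_update_not_on (by simp) hu)
      · intro b b' hb hb'
        have hb1 : b = a := by
          rcases eq_or_ne b a with rfl | hne
          · rfl
          · rw [Function.update_of_ne hne] at hb; exact absurd ⟨b, hb⟩ hnh
        have hb2 : b' = a := by
          rcases eq_or_ne b' a with rfl | hne
          · rfl
          · rw [Function.update_of_ne hne] at hb'; exact absurd ⟨b', hb'⟩ hnh
        rw [hb1, hb2]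
  | putdown a =>
      have hheld : s a = Loc.held := hApp
      simp only [bwSucc]
      have hnone : ∀ b, Function.update s a Loc.table b ≠ Loc.held := by
        intro b hb
        rcases eq_or_ne b a with rfl | hne
        · rw [Function.update_self] at hb; exact nomatch hb
        · rw [Function.update_of_ne hne] at hb
          exact hne (huniq b a hb hheld)
      refine ⟨?_, ?_, ?_⟩
      · intro b hb
        exact hacyc b (above_mono (fun u v h => edge_update_not_on (by simp) h) hb)
      · intro b hb; exact absurd hb (hnone b)
      · intro b b' hb _; exact absurd hb (hnone b)
  | stack a c =>
      obtain ⟨hheld, hcl, hne⟩ := hApp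
      simp only [bwSucc]
      set s' := Function.update s a (Loc.on c) with hs'
      have hedge : ∀ u v, s' u = Loc.on v → (u = a ∧ v = c) ∨ (u ≠ a ∧ s u = Loc.on v) := by
        intro u v h
        rcases eq_or_ne u a with rfl | hu
        · rw [hs', Function.update_self] at h
          exact Or.inl ⟨rfl, (Loc.on.inj h).symm⟩
        · rw [hs', Function.update_of_ne hu] at h
          exact Or.inr ⟨hu, h⟩
      -- No edge into a in s'
      have hNoIn : ∀ u, s' u ≠ Loc.on a := by
        intro u hu
        rcases hedge u a hu with ⟨rfl, rfl⟩ | ⟨_, h⟩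
        · exact hne rfl
        · exact hclear a hheld u h
      have hA : ∀ u, ¬ Above s' u a := by
        intro u hu
        cases hu with
        | single h => exact hNoIn u h
        | tail _ h => exact hNoIn _ h
      have hB : ∀ u v, Above s' u v → Above s u v ∨ Above s' u a ∨ u = a := by
        intro u v h
        induction h with
        | single h =>
            rcases hedge _ _ h with ⟨rfl, _⟩ | ⟨_, h'⟩
            · exact Or.inr (Or.inr rfl)
            · exact Or.inl (Relation.TransGen.single h')
        | tail h2 h3 ih =>
            rcases hedge _ _ h3 with ⟨rfl, _⟩ | ⟨_, h'⟩
            · exact Or.inr (Or.inl h2)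
            · rcases ih with h4 | h4 | h4
              · exact Or.inl (h4.tail h')
              · exact Or.inr (Or.inl h4)
              · exact Or.inr (Or.inr h4)
      refine ⟨?_, ?_, ?_⟩
      · intro b hb
        rcases hB b b hb with h | h | rfl
        · exact hacyc b h
        · exact hA b h
        · exact hA b hb
      · intro b hb u hu
        have hba : b ≠ a := by
          intro h; subst h
          rw [hs', Function.update_self] at hb; exact nomatch hb
        rw [hs', Function.update_of_ne hba] at hb
        rcases hedge u b hu with ⟨h1, h2⟩ | ⟨_, h⟩
        · exact hne ((huniq a b hheld hb).trans h2)
        · exact hclear b hb u h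
      · intro b b' hb hb'
        have hba : b ≠ a := by
          intro h; subst h
          rw [hs', Function.update_self] at hb; exact nomatch hb
        have hba' : b' ≠ a := by
          intro h; subst h
          rw [hs', Function.update_self] at hb'; exact nomatch hb'
        rw [hs', Function.update_of_ne hba] at hb
        rw [hs', Function.update_of_ne hba'] at hb'
        exact huniq b b' hb hb'

lemma inv_reach {s : BWState B} (h : ReachBW s) : BWInv s := by
  obtain ⟨s0, ⟨hnh, hacyc⟩, hrt⟩ := h
  have hI0 : BWInv s0 := by
    refine ⟨hacyc, ?_, ?_⟩
    · intro a ha; exact absurd ⟨a, ha⟩ hnh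
    · intro a b ha _; exact absurd ⟨a, ha⟩ hnh
  induction hrt with
  | refl => exact hI0
  | tail _ hstep ih =>
      obtain ⟨act, happ, heq⟩ := hstep
      rw [heq]; exact inv_step ih act happ

lemma nAbove_lt_of_on [Fintype B] {s : BWState B}
    (hacyc : ∀ b, ¬ Above s b b) {c a : B} (h : s c = Loc.on a) :
    nAbove s c < nAbove s a := by
  apply Set.ncard_lt_ncard _ (Set.toFinite _)
  have hsub : {b | Above s b c} ⊆ {b | Above s b a} := by
    intro u hu; exact Relation.TransGen.tail hu h
  exact (Set.ssubset_iff_of_subset hsub).2 ⟨c, Relation.TransGen.single h, hacyc c⟩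

end Aux

/-- The abstract actions {⟨¬H, n(x)>0; H, n(x)↓⟩, ⟨H; ¬H⟩} are sound
relative to Q_clear: in any reachable Blocksworld state, (i) if the gripper is empty
and some block is above x, unstacking a topmost block above x is applicable, makes H
true and strictly decreases n(x); (ii) if a block is held, putting it on the table is
applicable, makes H false, and leaves n(x) unchanged. -/
theorem stmt13 {B : Type} [DecidableEq B] [Fintype B] (x : B)
    (s : BWState B) (hreach : ReachBW s) :
    ((¬ Held s → (∃ b, Above s b x) →
      ∃ a c, bwApp s (BWAct.unstack a c) ∧ Above s a x ∧
        Held (bwSucc s (BWAct.unstack a c)) ∧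
        nAbove (bwSucc s (BWAct.unstack a c)) x < nAbove s x)) ∧
    (∀ a, s a = Loc.held →
      bwApp s (BWAct.putdown a) ∧ ¬ Held (bwSucc s (BWAct.putdown a)) ∧
        nAbove (bwSucc s (BWAct.putdown a)) x = nAbove s x) := by
  obtain ⟨hacyc, hclear, huniq⟩ := inv_reach hreach
  constructor
  · intro hnh ⟨b, hb⟩
    -- pick a minimal element (w.r.t. nAbove) of the set of blocks above x
    have hfin : ({b | Above s b x}).Finite := Set.toFinite _
    obtain ⟨a, haS, hmin⟩ := Set.exists_min_image {b | Above s b x} (fun b => nAbove s b)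
      hfin ⟨b, hb⟩
    have haS' : Above s a x := haS
    have hcl : clearTop s a := by
      intro u hu
      have huS : Above s u x := Relation.TransGen.head hu haS'
      have h1 : nAbove s a ≤ nAbove s u := hmin u huS
      have h2 : nAbove s u < nAbove s a := nAbove_lt_of_on hacyc hu
      omega
    obtain ⟨c, hc, _⟩ := Relation.TransGen.head'_iff.mp haS'
    refine ⟨a, c, ⟨hc, hcl, hnh⟩, haS', ⟨a, by simp [bwSucc]⟩, ?_⟩
    have hsub : {b | Above (bwSucc s (BWAct.unstack a c)) b x} ⊆ {b | Above s b x} := by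
      intro u hu
      refine above_mono ?_ hu
      intro p q hp
      simp only [bwSucc] at hp
      rcases eq_or_ne p a with rfl | hne
      · rw [Function.update_self] at hp; exact absurd hp (by simp)
      · rwa [Function.update_of_ne hne] at hp
    apply Set.ncard_lt_ncard _ (Set.toFinite _)
    refine (Set.ssubset_iff_of_subset hsub).2 ⟨a, haS', ?_⟩
    intro hcon
    obtain ⟨d, h, _⟩ := Relation.TransGen.head'_iff.mp hcon
    simp only [bwSucc, Function.update_self] at h
    exact nomatch h
  · intro a ha
    refine ⟨ha, ?_, ?_⟩
    · rintro ⟨b, hb⟩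
      rcases eq_or_ne b a with rfl | hne
      · rw [show bwSucc s (BWAct.putdown b) = Function.update s b Loc.table from rfl,
          Function.update_self] at hb
        exact nomatch hb
      · rw [show bwSucc s (BWAct.putdown a) = Function.update s a Loc.table from rfl,
          Function.update_of_ne hne] at hb
        exact hne (huniq b a hb ha)
    · have hset : {b | Above (bwSucc s (BWAct.putdown a)) b x} = {b | Above s b x} := by
        ext u
        simp only [Set.mem_setOf_eq]
        constructor
        · refine fun h => above_mono ?_ h
          intro p q hp
          rcases eq_or_ne p a with rfl | hne
          · rw [show bwSucc s (BWAct.putdown p) = Function.update s p Loc.table from rfl,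
              Function.update_self] at hp
            exact absurd hp (by simp)
          · rwa [show bwSucc s (BWAct.putdown a) = Function.update s a Loc.table from rfl,
              Function.update_of_ne hne] at hp
        · refine fun h => above_mono ?_ h
          intro p q hp
          rcases eq_or_ne p a with rfl | hne
          · rw [ha] at hp; exact absurd hp (by simp)
          · rw [show bwSucc s (BWAct.putdown a) = Function.update s a Loc.table from rfl,
              Function.update_of_ne hne]; exact hp
      unfold nAbove
      rw [hset]
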